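/- arXiv:1905.08241 — 3 statements merged into one kernel-verified Lean document; each statement's English description precedes it below -/
import Mathlib

section
/- Let (Σ,μ) be a σ-finite measure space, 1 ≤ p < ∞, Y an arbitrary Banach space, and Ω : L_p(μ) → Y a quasi-linear map. If Ω is locally disjointly trivial then Ω is locally trivial (and conversely); that is, local disjoint triviality and local triviality are equivalent for quasi-linear maps on L_p(μ). -/
open MeasureTheory
open scoped ENNReal

noncomputable section

section Defs

variable {X Y : Type*} [NormedAddCommGroup X] [NormedSpace ℝ X]
  [NormedAddCommGroup Y] [NormedSpace ℝ Y]

/-- `Ω` is quasi-linear: homogeneous and quasi-additive. -/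
def IsQuasiLinear (Ω : X → Y) : Prop :=
  (∀ (c : ℝ) (x : X), Ω (c • x) = c • Ω x) ∧
    ∃ Q : ℝ, 0 ≤ Q ∧ ∀ x y : X, ‖Ω (x + y) - Ω x - Ω y‖ ≤ Q * (‖x‖ + ‖y‖)

/-- `Ω` is `C`-trivial on the subspace `E`: some (possibly discontinuous) linear map
`L : E → Y` is at distance at most `C` from `Ω` on `E`. -/
def TrivialOnWith (Ω : X → Y) (E : Submodule ℝ X) (C : ℝ) : Prop :=
  ∃ L : E →ₗ[ℝ] Y, ∀ x : E, ‖Ω x - L x‖ ≤ C * ‖(x : X)‖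

/-- `Ω` is trivial on the subspace `E`. -/
def TrivialOn (Ω : X → Y) (E : Submodule ℝ X) : Prop :=
  ∃ C : ℝ, 0 ≤ C ∧ TrivialOnWith Ω E C

/-- `Ω` is trivial. -/
def IsTrivial (Ω : X → Y) : Prop := TrivialOn Ω ⊤

/-- `Ω` is locally trivial: a uniform constant works for all finite-dimensional subspaces. -/
def LocallyTrivial (Ω : X → Y) : Prop :=
  ∃ C : ℝ, 0 < C ∧ ∀ F : Submodule ℝ X, FiniteDimensional ℝ F → TrivialOnWith Ω F C

end Defs

section LpDefs

variable {α : Type*} [MeasurableSpace α] {μ : Measure α} {q : ℝ≥0∞}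
  {Y : Type*} [NormedAddCommGroup Y] [NormedSpace ℝ Y]

/-- Two elements of `L_p(μ)` are disjointly supported (up to null sets). -/
def DisjSupp (f g : Lp ℝ q μ) : Prop := ∀ᵐ a ∂μ, f a = 0 ∨ g a = 0

/-- `Ω` is disjointly trivial: it is trivial on every closed subspace generated by a
sequence of disjointly supported elements. -/
def DisjointlyTrivial [Fact (1 ≤ q)] (Ω : Lp ℝ q μ → Y) : Prop :=
  ∀ u : ℕ → Lp ℝ q μ, Pairwise (fun i j => DisjSupp (u i) (u j)) →
    TrivialOn Ω (Submodule.span ℝ (Set.range u)).topologicalClosure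

/-- `Ω` is locally disjointly trivial: a uniform constant works for all finite-dimensional
subspaces spanned by finitely many disjointly supported vectors. -/
def LocallyDisjointlyTrivial [Fact (1 ≤ q)] (Ω : Lp ℝ q μ → Y) : Prop :=
  ∃ C : ℝ, 0 < C ∧ ∀ (n : ℕ) (u : Fin n → Lp ℝ q μ),
    Pairwise (fun i j => DisjSupp (u i) (u j)) →
    TrivialOnWith Ω (Submodule.span ℝ (Set.range u)) C

end LpDefs

/-!
Fix a finite-dimensional `F ⊆ L_p(μ)` and approximate a basis of `F` by simple functions. The
level sets of this finite family are finitely many disjoint sets of finite measure, so the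
approximants lie in the span `G` of disjointly supported indicators, where `Ω` is `C`-trivial.
Sending each basis vector to its approximant gives a linear `S : F → G` with
`‖x - S x‖ ≤ η ‖x‖`. On a finite-dimensional space `Ω ∘ T` is within `κ ‖T‖` of a linear map, so
for small `η` the map `Ω` is `1`-trivial along `x ↦ x - S x`, and quasi-additivity glues this to
the linear map on `G`: `Ω` is `(3Q + 2C + 1)`-trivial on `F`, a constant independent of `F`.
-/

section QuasiLinear

variable {X Y : Type*} [NormedAddCommGroup X] [NormedAddCommGroup Y] {Ω : X → Y} {Q : ℝ}

theorem map_zero_of_quasiAdditive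
    (hQ : ∀ x y : X, ‖Ω (x + y) - Ω x - Ω y‖ ≤ Q * (‖x‖ + ‖y‖)) : Ω 0 = 0 := by
  simpa using hQ 0 0

theorem norm_map_sum_sub_sum_le (hQ0 : 0 ≤ Q)
    (hQ : ∀ x y : X, ‖Ω (x + y) - Ω x - Ω y‖ ≤ Q * (‖x‖ + ‖y‖))
    {ι : Type*} (s : Finset ι) (y : ι → X) :
    ‖Ω (∑ i ∈ s, y i) - ∑ i ∈ s, Ω (y i)‖ ≤ Q * s.card * ∑ i ∈ s, ‖y i‖ := by
  induction s using Finset.cons_induction with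
  | empty => simp [map_zero_of_quasiAdditive hQ]
  | cons j s hj ih =>
    set S := ∑ i ∈ s, y i
    have hS : ‖S‖ ≤ ∑ i ∈ s, ‖y i‖ := norm_sum_le _ _
    have hsplit : Ω (∑ i ∈ s.cons j hj, y i) - ∑ i ∈ s.cons j hj, Ω (y i) =
        (Ω (y j + S) - Ω (y j) - Ω S) + (Ω S - ∑ i ∈ s, Ω (y i)) := by
      rw [Finset.sum_cons, Finset.sum_cons]; abel
    rw [hsplit, Finset.card_cons, Finset.sum_cons]
    calc _ ≤ Q * (‖y j‖ + ‖S‖) + Q * s.card * ∑ i ∈ s, ‖y i‖ :=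
          (norm_add_le _ _).trans (add_le_add (hQ _ _) ih)
      _ ≤ Q * ↑(s.card + 1) * (‖y j‖ + ∑ i ∈ s, ‖y i‖) := by
          have := Finset.sum_nonneg fun i (_ : i ∈ s) => norm_nonneg (y i)
          push_cast
          nlinarith [mul_le_mul_of_nonneg_left hS hQ0, norm_nonneg (y j),
            mul_nonneg (mul_nonneg hQ0 (Nat.cast_nonneg (α := ℝ) s.card)) (norm_nonneg (y j))]

variable [NormedSpace ℝ X] [NormedSpace ℝ Y]

theorem TrivialOnWith.of_perturbation (hQ0 : 0 ≤ Q)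
    (hQ : ∀ x y : X, ‖Ω (x + y) - Ω x - Ω y‖ ≤ Q * (‖x‖ + ‖y‖))
    {F G : Submodule ℝ X} {C : ℝ} (hC : 0 ≤ C) (hG : TrivialOnWith Ω G C)
    (S : F →ₗ[ℝ] G) (M : F →ₗ[ℝ] Y) (hS : ∀ x : F, ‖(x : X) - S x‖ ≤ ‖x‖)
    (hM : ∀ x : F, ‖Ω ((x : X) - S x) - M x‖ ≤ ‖x‖) :
    TrivialOnWith Ω F (3 * Q + 2 * C + 1) := by
  obtain ⟨LG, hLG⟩ := hG
  refine ⟨LG ∘ₗ S + M, fun x => ?_⟩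
  set s : X := (S x : X)
  set d : X := x - s
  have hs : ‖s‖ ≤ 2 * ‖x‖ := by
    calc ‖s‖ = ‖(x : X) - d‖ := by simp [d]
      _ ≤ ‖x‖ + ‖d‖ := norm_sub_le _ _
      _ ≤ 2 * ‖x‖ := by linarith [hS x]
  have hsplit : Ω x - (LG ∘ₗ S + M) x =
      (Ω (s + d) - Ω s - Ω d) + (Ω s - LG (S x)) + (Ω d - M x) := by
    simp only [LinearMap.add_apply, LinearMap.comp_apply, s, d, add_sub_cancel]; abel
  rw [hsplit]
  calc _ ≤ Q * (‖s‖ + ‖d‖) + C * ‖s‖ + ‖x‖ :=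
        norm_add₃_le.trans (add_le_add_three (hQ _ _) (hLG _) (hM x))
    _ ≤ (3 * Q + 2 * C + 1) * ‖(x : X)‖ := by
        have : ‖x‖ = ‖(x : X)‖ := rfl
        nlinarith [mul_le_mul_of_nonneg_left hs hC, mul_le_mul_of_nonneg_left hs hQ0,
          mul_le_mul_of_nonneg_left (hS x) hQ0]

theorem IsQuasiLinear.exists_norm_comp_sub_linear_le (hΩ : IsQuasiLinear Ω)
    {E : Type*} [NormedAddCommGroup E] [NormedSpace ℝ E] [FiniteDimensional ℝ E] :
    ∃ κ : ℝ, 0 ≤ κ ∧ ∀ T : E →L[ℝ] X, ∃ M : E →ₗ[ℝ] Y,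
      ∀ x, ‖Ω (T x) - M x‖ ≤ κ * ‖T‖ * ‖x‖ := by
  obtain ⟨hhom, Q, hQ0, hQ⟩ := hΩ
  set b := Module.finBasis ℝ E
  set φ := b.equivFunL.toContinuousLinearMap
  refine ⟨Q * Module.finrank ℝ E * (‖φ‖ * ∑ i, ‖b i‖), by positivity,
    fun T => ⟨b.constr ℝ fun i => Ω (T (b i)), fun x => ?_⟩⟩
  have hcoord : ∀ i, |b.equivFun x i| ≤ ‖φ‖ * ‖x‖ := fun i =>
    calc |b.equivFun x i| = ‖φ x i‖ := rfl
      _ ≤ ‖φ x‖ := norm_le_pi_norm _ i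
      _ ≤ ‖φ‖ * ‖x‖ := φ.le_opNorm x
  have hterm : ∀ i, ‖b.equivFun x i • T (b i)‖ ≤ ‖φ‖ * ‖b i‖ * ‖T‖ * ‖x‖ := fun i => by
    rw [norm_smul, Real.norm_eq_abs]
    calc _ ≤ (‖φ‖ * ‖x‖) * (‖T‖ * ‖b i‖) :=
          mul_le_mul (hcoord i) (T.le_opNorm _) (norm_nonneg _) (by positivity)
      _ = _ := by ring
  have hTx : T x = ∑ i, b.equivFun x i • T (b i) := by
    conv_lhs => rw [← b.sum_equivFun x]
    simp only [map_sum, map_smul]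
  have hMx : b.constr ℝ (fun i => Ω (T (b i))) x = ∑ i, Ω (b.equivFun x i • T (b i)) := by
    simp only [Module.Basis.constr_apply_fintype, hhom]
  rw [hTx, hMx]
  refine (norm_map_sum_sub_sum_le hQ0 hQ _ _).trans ?_
  rw [Finset.card_univ, Fintype.card_fin]
  calc _ ≤ Q * Module.finrank ℝ E * ∑ i, ‖φ‖ * ‖b i‖ * ‖T‖ * ‖x‖ := by
        gcongr with i; exact hterm i
    _ = _ := by simp only [← Finset.sum_mul, ← Finset.mul_sum]; ring

theorem IsQuasiLinear.locallyTrivial_of_forall_approx (hΩ : IsQuasiLinear Ω) {C : ℝ}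
    (hC : 0 ≤ C)
    (happrox : ∀ (n : ℕ) (v : Fin n → X) (η : ℝ), 0 < η →
      ∃ G : Submodule ℝ X, TrivialOnWith Ω G C ∧ ∀ i, ∃ w ∈ G, dist (v i) w < η) :
    LocallyTrivial Ω := by
  obtain ⟨Q, hQ0, hQ⟩ := hΩ.2
  refine ⟨3 * Q + 2 * C + 1, by positivity, fun F hF => ?_⟩
  set b := Module.finBasis ℝ F
  obtain ⟨K, hK, hopNorm⟩ := b.exists_opNorm_le (F := X)
  obtain ⟨κ, hκ, hcomp⟩ := hΩ.exists_norm_comp_sub_linear_le (E := F)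
  set η := 1 / (K * (κ + 1))
  obtain ⟨G, hG, hw⟩ := happrox _ (fun i => b i) η (by positivity)
  choose w hwG hwdist using hw
  set S : F →ₗ[ℝ] G := b.constr ℝ fun i => ⟨w i, hwG i⟩
  set T : F →L[ℝ] X := LinearMap.toContinuousLinearMap (F.subtype - G.subtype ∘ₗ S)
  have hT : ‖T‖ ≤ 1 / (κ + 1) := by
    calc ‖T‖ ≤ K * η := hopNorm (by positivity) fun i => by
          simpa [T, S, dist_eq_norm] using (hwdist i).le
      _ = 1 / (κ + 1) := by simp only [η]; field_simp
  have hT1 : ‖T‖ ≤ 1 := hT.trans (by rw [div_le_one (by positivity)]; linarith)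
  have hκT : κ * ‖T‖ ≤ 1 := by
    calc κ * ‖T‖ ≤ κ * (1 / (κ + 1)) := by gcongr
      _ ≤ 1 := by rw [mul_one_div, div_le_one (by positivity)]; linarith
  obtain ⟨M, hM⟩ := hcomp T
  refine hG.of_perturbation hQ0 hQ hC S M (fun x => ?_) (fun x => ?_)
  · calc ‖(x : X) - S x‖ = ‖T x‖ := rfl
      _ ≤ ‖T‖ * ‖x‖ := T.le_opNorm x
      _ ≤ ‖x‖ := by nlinarith [norm_nonneg x]
  · calc ‖Ω ((x : X) - S x) - M x‖ = ‖Ω (T x) - M x‖ := rfl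
      _ ≤ κ * ‖T‖ * ‖x‖ := hM x
      _ ≤ ‖x‖ := by nlinarith [norm_nonneg x]

end QuasiLinear

section Lp

variable {α : Type*} [MeasurableSpace α] {μ : Measure α} {q : ℝ≥0∞}

theorem disjSupp_indicatorConstLp {s t : Set α} (hs : MeasurableSet s) (ht : MeasurableSet t)
    (hμs : μ s ≠ ∞) (hμt : μ t ≠ ∞) (hst : Disjoint s t) (c d : ℝ) :
    DisjSupp (indicatorConstLp q hs hμs c) (indicatorConstLp q ht hμt d) := by
  filter_upwards [indicatorConstLp_coeFn_notMem (c := c), indicatorConstLp_coeFn_notMem (c := d)]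
    with a hsa hta
  by_cases ha : a ∈ s
  · exact Or.inr (hta (Set.disjoint_left.mp hst ha))
  · exact Or.inl (hsa ha)

variable [Fact (1 ≤ q)]

theorem exists_pairwise_disjSupp_span_of_simpleFunc (hq : q ≠ ∞) {ι : Type*} [Fintype ι]
    (f : ι → Lp.simpleFunc ℝ q μ) :
    ∃ (m : ℕ) (u : Fin m → Lp ℝ q μ), Pairwise (fun i j => DisjSupp (u i) (u j)) ∧
      ∀ i, (f i : Lp ℝ q μ) ∈ Submodule.span ℝ (Set.range u) := by
  classical
  set F := fun i => Lp.simpleFunc.toSimpleFunc (f i)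
  set g : α → ι → ℝ := fun a i => F i a
  have hg_range : (Set.range g).Finite :=
    (Set.Finite.pi' fun i => (F i).finite_range).subset (by rintro _ ⟨a, rfl⟩ i; exact ⟨a, rfl⟩)
  -- the level set `g ⁻¹' {0}` may have infinite measure
  set t := hg_range.toFinset.erase 0
  have hA_meas : ∀ v, MeasurableSet (g ⁻¹' {v}) := fun v =>
    measurable_pi_lambda _ (fun i => (F i).measurable) (measurableSet_singleton v)
  have hA_fin : ∀ v ∈ t, μ (g ⁻¹' {v}) ≠ ∞ := by
    intro v hv
    obtain ⟨i, hi⟩ := Function.ne_iff.mp (Finset.ne_of_mem_erase hv)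
    have hsub : g ⁻¹' {v} ⊆ F i ⁻¹' {v i} := fun a ha => congrFun ha i
    exact ((measure_mono hsub).trans_lt (SimpleFunc.measure_preimage_lt_top_of_memLp
      (zero_lt_one.trans_le Fact.out).ne' hq _ (Lp.simpleFunc.memLp (f i)) _ hi)).ne
  have hg_sum : ∀ a i, ∑ v ∈ t, (g ⁻¹' {v}).indicator (fun _ => v i) a = g a i := by
    intro a i
    simp only [Set.indicator_apply, Set.mem_preimage, Set.mem_singleton_iff, Finset.sum_ite_eq]
    split_ifs with ha
    · rfl
    · exact (congrFun (show g a = 0 by simpa [t, hg_range.mem_toFinset] using ha) i).symm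
  set u : t → Lp ℝ q μ := fun v => indicatorConstLp q (hA_meas v) (hA_fin v v.2) 1
  have hu_disj : Pairwise (fun v w => DisjSupp (u v) (u w)) := fun v w hvw =>
    disjSupp_indicatorConstLp _ _ _ _
      (Set.disjoint_singleton.mpr (Subtype.coe_injective.ne hvw) |>.preimage g) _ _
  have hf_eq : ∀ i, (f i : Lp ℝ q μ) = ∑ v : t, (v : ι → ℝ) i • u v := by
    intro i
    have hu_ae : ∀ᵐ a ∂μ, ∀ v : t,
        ((v : ι → ℝ) i • u v) a = (g ⁻¹' {(v : ι → ℝ)}).indicator (fun _ => (v : ι → ℝ) i) a := by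
      refine ae_all_iff.mpr fun v => ?_
      filter_upwards [Lp.coeFn_smul ((v : ι → ℝ) i) (u v),
        indicatorConstLp_coeFn (p := q) (hs := hA_meas v) (hμs := hA_fin v v.2) (c := (1 : ℝ))]
        with a h1 h2
      rw [h1, Pi.smul_apply, smul_eq_mul, show u v = indicatorConstLp q _ _ 1 from rfl, h2]
      simp [Set.indicator_apply]
    refine Lp.ext ?_
    filter_upwards [Lp.simpleFunc.toSimpleFunc_eq_toFun (f i),
      Lp.coeFn_finsetSum Finset.univ (fun v : t => (v : ι → ℝ) i • u v), hu_ae] with a h1 h2 h3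
    rw [← h1, h2, Finset.sum_apply]
    simp only [h3]
    exact (Finset.sum_coe_sort t fun v => (g ⁻¹' {v}).indicator (fun _ => v i) a).trans
      (hg_sum a i) |>.symm
  refine ⟨t.card, u ∘ t.equivFin.symm,
    fun i j hij => hu_disj (t.equivFin.symm.injective.ne hij), fun i => ?_⟩
  rw [EquivLike.range_comp, hf_eq]
  exact Submodule.sum_mem _ fun v _ => Submodule.smul_mem _ _ (Submodule.subset_span ⟨v, rfl⟩)

theorem exists_pairwise_disjSupp_span_approx (hq : q ≠ ∞) {n : ℕ} (v : Fin n → Lp ℝ q μ)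
    {η : ℝ} (hη : 0 < η) :
    ∃ (m : ℕ) (u : Fin m → Lp ℝ q μ), Pairwise (fun i j => DisjSupp (u i) (u j)) ∧
      ∀ i, ∃ w ∈ Submodule.span ℝ (Set.range u), dist (v i) w < η := by
  choose s hs using fun i =>
    (Lp.simpleFunc.denseRange (E := ℝ) (μ := μ) hq).exists_dist_lt (v i) hη
  obtain ⟨m, u, hu, hspan⟩ := exists_pairwise_disjSupp_span_of_simpleFunc hq s
  exact ⟨m, u, hu, fun i => ⟨s i, hspan i, hs i⟩⟩

end Lp

theorem locallyDisjointlyTrivial_iff_locallyTrivial_general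
    {α : Type*} [MeasurableSpace α] {μ : Measure α}
    {q : ℝ≥0∞} [Fact (1 ≤ q)] (hq : q ≠ ∞)
    {Y : Type*} [NormedAddCommGroup Y] [NormedSpace ℝ Y]
    (Ω : Lp ℝ q μ → Y) (hΩ : IsQuasiLinear Ω) :
    LocallyDisjointlyTrivial Ω ↔ LocallyTrivial Ω := by
  constructor
  · rintro ⟨C, hC, hdisj⟩
    refine hΩ.locallyTrivial_of_forall_approx hC.le fun n v η hη => ?_
    obtain ⟨m, u, hu, happrox⟩ := exists_pairwise_disjSupp_span_approx hq v hη
    exact ⟨_, hdisj m u hu, happrox⟩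
  · rintro ⟨C, hC, htriv⟩
    exact ⟨C, hC, fun n u _ => htriv _ (FiniteDimensional.span_of_finite ℝ (Set.finite_range u))⟩

/-- For quasi-linear maps on `L_p(μ)` (`σ`-finite measure, `1 ≤ p < ∞`)
with values in an arbitrary Banach space, local disjoint triviality and local triviality
are equivalent. -/
theorem locallyDisjointlyTrivial_iff_locallyTrivial
    {α : Type*} [MeasurableSpace α] {μ : Measure α} [SigmaFinite μ]
    {q : ℝ≥0∞} [Fact (1 ≤ q)] (hq : q ≠ ∞)
    {Y : Type*} [NormedAddCommGroup Y] [NormedSpace ℝ Y] [CompleteSpace Y]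
    (Ω : Lp ℝ q μ → Y) (hΩ : IsQuasiLinear Ω) :
    LocallyDisjointlyTrivial Ω ↔ LocallyTrivial Ω :=
  locallyDisjointlyTrivial_iff_locallyTrivial_general hq Ω hΩ
end
end

section
/- Let (Σ,μ) be a σ-finite measure space, 1 ≤ p < ∞, and let Ω be a contractive, quasi-linear L∞-centralizer on L_p(μ) with centralizer constant C(Ω). Then for every finite family v_1,…,v_n of normalized pairwise disjointly supported functions in L_p(μ) one has ‖Ω(Σ_{i=1}^n v_i) − Σ_{i=1}^n Ω(v_i)‖_p ≤ C(Ω)·‖Σ_{i=1}^n v_i‖_p + ∇_{[(v_1,…,v_n)]}Ω. -/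
open MeasureTheory
open scoped ENNReal

noncomputable section

section L0Defs

variable {α : Type*} [MeasurableSpace α] {μ : Measure α} {q : ℝ≥0∞}

/-- `Ω : L_p(μ) → L⁰(μ)` is trivial on a subspace `E`: some (possibly discontinuous) linear
map `L : E → L⁰` satisfies that `Ω - L` takes values in `L_p` on `E` and is bounded there. -/
def L0TrivialOn (Ω : Lp ℝ q μ → (α →ₘ[μ] ℝ)) (E : Submodule ℝ (Lp ℝ q μ)) : Prop :=
  ∃ (L : E →ₗ[ℝ] (α →ₘ[μ] ℝ)) (C : ℝ), 0 ≤ C ∧ ∀ x : E,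
    eLpNorm (⇑(Ω x - L x)) q μ ≤ ENNReal.ofReal (C * ‖(x : Lp ℝ q μ)‖)

/-- `Ω : L_p(μ) → L⁰(μ)` is an `L_∞`-centralizer with constant `C`: it is homogeneous and,
whenever `y = f·x` in `L⁰` with `f ∈ L_∞` and `x ∈ L_p`, the difference `Ω(f x) - f·Ω(x)`
has `L_p`-norm at most `C‖f‖_∞‖x‖_p` (in particular it lies in `L_p`). -/
def IsCentralizerWith (Ω : Lp ℝ q μ → (α →ₘ[μ] ℝ)) (C : ℝ) : Prop :=
  (∀ (c : ℝ) (x : Lp ℝ q μ), Ω (c • x) = c • Ω x) ∧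
    ∀ f : α →ₘ[μ] ℝ, f ∈ Lp ℝ ⊤ μ → ∀ x y : Lp ℝ q μ, (y : α →ₘ[μ] ℝ) = f * ↑x →
      eLpNorm (⇑(Ω y - f * Ω x)) q μ ≤
        ENNReal.ofReal (C * (eLpNorm (⇑f) ⊤ μ).toReal * ‖x‖)

/-- `Ω` is quasi-linear as a map with values in `L⁰` relative to the `L_p` norm. -/
def L0QuasiLinear (Ω : Lp ℝ q μ → (α →ₘ[μ] ℝ)) : Prop :=
  ∃ Q : ℝ, 0 ≤ Q ∧ ∀ x y : Lp ℝ q μ,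
    eLpNorm (⇑(Ω (x + y) - Ω x - Ω y)) q μ ≤ ENNReal.ofReal (Q * (‖x‖ + ‖y‖))

/-- `Ω` is contractive: `supp Ω(x) ⊆ supp x` a.e. -/
def Contractive (Ω : Lp ℝ q μ → (α →ₘ[μ] ℝ)) : Prop :=
  ∀ x : Lp ℝ q μ, ∀ᵐ a ∂μ, x a = 0 → Ω x a = 0

/-- `Ω` is disjointly singular: its restriction to the closed linear span of every sequence
of nonzero pairwise disjointly supported elements is not trivial. -/
def L0DisjointlySingular [Fact (1 ≤ q)] (Ω : Lp ℝ q μ → (α →ₘ[μ] ℝ)) : Prop :=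
  ∀ u : ℕ → Lp ℝ q μ, (∀ n, u n ≠ 0) → Pairwise (fun i j => DisjSupp (u i) (u j)) →
    ¬ L0TrivialOn Ω (Submodule.span ℝ (Set.range u)).topologicalClosure

/-- The average `∇_{[b]}Ω` over all choices of signs of
`‖Ω (∑ ± b_k) - ∑ ± Ω(b_k)‖_p` (computed in `ℝ≥0∞`). -/
def nabla (Ω : Lp ℝ q μ → (α →ₘ[μ] ℝ)) {n : ℕ} (b : Fin n → Lp ℝ q μ) : ℝ≥0∞ :=
  (2 ^ n : ℝ≥0∞)⁻¹ * ∑ ε : Fin n → Bool,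
    eLpNorm (⇑(Ω (∑ k, (if ε k then (1:ℝ) else -1) • b k)
      - ∑ k, (if ε k then (1:ℝ) else -1) • Ω (b k))) q μ

end L0Defs

/-!
Fix signs `c_i = ±1`, put `S = ∑ c_i v_i` and `m = ∑ c_i 1_{supp v_i}`. Disjointness gives
`|m| ≤ 1`, `m · ∑ v_i = S` and, since `c_i² = 1`, `m · S = ∑ v_i`; contractivity gives
`m · Ω(v_i) = c_i Ω(v_i)`. Hence
`Ω(∑ v_i) - ∑ Ω(v_i) = (Ω(m S) - m Ω(S)) + m (Ω(S) - ∑ c_i Ω(v_i))`,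
whose first term is at most `C(Ω) ‖S‖ = C(Ω) ‖∑ v_i‖` and whose second is at most the signed
defect `‖Ω(S) - ∑ c_i Ω(v_i)‖`. Choosing the signs with the smallest defect bounds it by the
average `∇_{[v]}Ω`.
-/

theorem ENNReal.exists_le_inv_card_mul_sum {ι : Type*} [Fintype ι] [Nonempty ι] (f : ι → ℝ≥0∞) :
    ∃ i, f i ≤ (Fintype.card ι : ℝ≥0∞)⁻¹ * ∑ j, f j := by
  obtain ⟨i, hi⟩ := Finite.exists_min f
  refine ⟨i, ?_⟩
  have hcard : (Fintype.card ι : ℝ≥0∞) ≠ 0 := by exact_mod_cast Fintype.card_ne_zero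
  calc f i = (Fintype.card ι : ℝ≥0∞)⁻¹ * ∑ _j : ι, f i := by
        rw [Finset.sum_const, Finset.card_univ, nsmul_eq_mul, ← mul_assoc,
          ENNReal.inv_mul_cancel hcard (ENNReal.natCast_ne_top _), one_mul]
    _ ≤ (Fintype.card ι : ℝ≥0∞)⁻¹ * ∑ j, f j := by gcongr with j; exact hi j

namespace MeasureTheory

variable {α : Type*} [MeasurableSpace α] {μ : Measure α} {q : ℝ≥0∞}

namespace AEEqFun

def mulLeftₗ (m : α →ₘ[μ] ℝ) : (α →ₘ[μ] ℝ) →ₗ[ℝ] α →ₘ[μ] ℝ where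
  toFun := (m * ·)
  map_add' f g := toGerm_injective <| by simp only [mul_toGerm, add_toGerm, mul_add]
  map_smul' c f := induction_on₂ m f fun φ hφ ψ hψ => by
    simp only [smul_mk, mk_mul_mk, RingHom.id_apply, mul_smul_comm]

@[simp]
theorem mulLeftₗ_apply (m f : α →ₘ[μ] ℝ) : mulLeftₗ m f = m * f := rfl

section Sums

variable {ι : Type*} [Fintype ι] {m : α →ₘ[μ] ℝ} {c : ι → ℝ} {w : ι → α →ₘ[μ] ℝ}

theorem mul_sum_eq_sum_smul (h : ∀ i, m * w i = c i • w i) : m * ∑ i, w i = ∑ i, c i • w i := by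
  simpa only [mulLeftₗ_apply] using
    (map_sum (mulLeftₗ m) w _).trans (Finset.sum_congr rfl fun i _ => h i)

theorem mul_sum_smul_eq_sum (h : ∀ i, m * w i = c i • w i) (hc : ∀ i, c i * c i = 1) :
    m * ∑ i, c i • w i = ∑ i, w i := by
  refine (map_sum (mulLeftₗ m) _ _).trans (Finset.sum_congr rfl fun i _ => ?_)
  rw [map_smul, mulLeftₗ_apply, h, smul_smul, hc, one_smul]

end Sums

theorem eLpNorm_mul_le {m : α →ₘ[μ] ℝ} (hm : ∀ᵐ a ∂μ, ‖m a‖ ≤ 1) (g : α →ₘ[μ] ℝ) :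
    eLpNorm (⇑(m * g)) q μ ≤ eLpNorm (⇑g) q μ := by
  refine eLpNorm_mono_ae ?_
  filter_upwards [coeFn_mul m g, hm] with a hmg hma
  rw [hmg, Pi.mul_apply, norm_mul]
  exact mul_le_of_le_one_left (norm_nonneg _) hma

theorem eLpNorm_top_le_one {m : α →ₘ[μ] ℝ} (hm : ∀ᵐ a ∂μ, ‖m a‖ ≤ 1) :
    eLpNorm (⇑m) ⊤ μ ≤ 1 := by
  simpa [eLpNorm_exponent_top] using eLpNormEssSup_le_of_ae_bound hm

theorem mem_Lp_top {m : α →ₘ[μ] ℝ} (hm : ∀ᵐ a ∂μ, ‖m a‖ ≤ 1) : m ∈ Lp ℝ ⊤ μ :=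
  Lp.mem_Lp_iff_eLpNorm_lt_top.2 ((eLpNorm_top_le_one hm).trans_lt ENNReal.one_lt_top)

end AEEqFun

theorem Lp.norm_le_of_coe_eq_mul {m : α →ₘ[μ] ℝ} (hm : ∀ᵐ a ∂μ, ‖m a‖ ≤ 1) {x y : Lp ℝ q μ}
    (h : (y : α →ₘ[μ] ℝ) = m * x) : ‖y‖ ≤ ‖x‖ := by
  rw [Lp.norm_def, Lp.norm_def]
  refine ENNReal.toReal_mono (Lp.eLpNorm_ne_top x) ?_
  simpa only [← h] using AEEqFun.eLpNorm_mul_le hm (x : α →ₘ[μ] ℝ)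

theorem IsCentralizerWith.eLpNorm_sub_mul_le {Ω : Lp ℝ q μ → (α →ₘ[μ] ℝ)} {C : ℝ}
    (hΩ : IsCentralizerWith Ω C) {m : α →ₘ[μ] ℝ} (hm : ∀ᵐ a ∂μ, ‖m a‖ ≤ 1) {x y : Lp ℝ q μ}
    (hxy : ‖x‖ ≤ ‖y‖) (h : (y : α →ₘ[μ] ℝ) = m * x) :
    eLpNorm (⇑(Ω y - m * Ω x)) q μ ≤ ENNReal.ofReal (C * ‖y‖) := by
  refine (hΩ.2 m (AEEqFun.mem_Lp_top hm) x y h).trans ?_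
  have hm₀ : 0 ≤ (eLpNorm (⇑m) ⊤ μ).toReal := ENNReal.toReal_nonneg
  have hm₁ : (eLpNorm (⇑m) ⊤ μ).toReal ≤ 1 :=
    ENNReal.toReal_le_of_le_ofReal zero_le_one (by simpa using AEEqFun.eLpNorm_top_le_one hm)
  have hx₀ : 0 ≤ ‖x‖ := by rw [Lp.norm_def]; exact ENNReal.toReal_nonneg
  rcases le_or_gt 0 C with hC | hC
  · rw [mul_assoc]
    gcongr
    exact (mul_le_of_le_one_left hx₀ hm₁).trans hxy
  · rw [ENNReal.ofReal_of_nonpos (by nlinarith [mul_nonneg hm₀ hx₀])]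
    exact zero_le

section SignMultiplier

variable {ι : Type*} [Fintype ι]

def signMultiplier (v : ι → Lp ℝ q μ) (c : ι → ℝ) : α →ₘ[μ] ℝ :=
  AEEqFun.mk (fun a => ∑ i, if v i a = 0 then 0 else c i) <|
    (Finset.measurable_sum _ fun i _ => Measurable.ite
      ((Lp.stronglyMeasurable (v i)).measurable (measurableSet_singleton 0))
      measurable_const measurable_const).aestronglyMeasurable

theorem coeFn_signMultiplier (v : ι → Lp ℝ q μ) (c : ι → ℝ) :
    ⇑(signMultiplier v c) =ᵐ[μ] fun a => ∑ i, if v i a = 0 then 0 else c i :=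
  AEEqFun.coeFn_mk _ _

variable {v : ι → Lp ℝ q μ}

theorem ae_signMultiplier_eq (hdisj : Pairwise (fun i j => DisjSupp (v i) (v j))) (c : ι → ℝ) (j : ι) :
    ∀ᵐ a ∂μ, v j a ≠ 0 → signMultiplier v c a = c j := by
  have hj : ∀ᵐ a ∂μ, ∀ i, i ≠ j → v i a = 0 ∨ v j a = 0 :=
    ae_all_iff.2 fun i => by
      by_cases hij : i = j
      · exact .of_forall fun _ h => absurd hij h
      · exact (hdisj hij).mono fun _ ha _ => ha
  filter_upwards [coeFn_signMultiplier v c, hj] with a hm hj ha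
  rw [hm, Finset.sum_eq_single j]
  · exact if_neg ha
  · exact fun i _ hij => if_pos ((hj i hij).resolve_right ha)
  · exact fun h => absurd (Finset.mem_univ j) h

theorem signMultiplier_mul_of_ae (hdisj : Pairwise (fun i j => DisjSupp (v i) (v j))) (c : ι → ℝ) (j : ι)
    {w : α →ₘ[μ] ℝ} (hw : ∀ᵐ a ∂μ, v j a = 0 → w a = 0) :
    signMultiplier v c * w = c j • w := by
  apply AEEqFun.ext
  filter_upwards [AEEqFun.coeFn_mul (signMultiplier v c) w, AEEqFun.coeFn_smul (c j) w, hw,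
    ae_signMultiplier_eq hdisj c j] with a hmul hsmul hw hm
  rw [hmul, hsmul, Pi.mul_apply, Pi.smul_apply, smul_eq_mul]
  by_cases ha : v j a = 0
  · rw [hw ha, mul_zero, mul_zero]
  · rw [hm ha]

theorem ae_norm_signMultiplier_le_one (hdisj : Pairwise (fun i j => DisjSupp (v i) (v j))) (c : ι → ℝ)
    (hc : ∀ i, |c i| ≤ 1) :
    ∀ᵐ a ∂μ, ‖signMultiplier v c a‖ ≤ 1 := by
  filter_upwards [coeFn_signMultiplier v c, ae_all_iff.2 (ae_signMultiplier_eq hdisj c)]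
    with a hm hsupp
  by_cases h : ∃ j, v j a ≠ 0
  · obtain ⟨j, hj⟩ := h
    rw [hsupp j hj, Real.norm_eq_abs]
    exact hc j
  · push Not at h
    rw [hm, Finset.sum_eq_zero fun i _ => if_pos (h i), norm_zero]
    exact zero_le_one

end SignMultiplier

theorem eLpNorm_omega_sum_le_signed [Fact (1 ≤ q)] {Ω : Lp ℝ q μ → (α →ₘ[μ] ℝ)} {C : ℝ}
    (hΩ : IsCentralizerWith Ω C) (hcontr : Contractive Ω) {ι : Type*} [Fintype ι]
    {v : ι → Lp ℝ q μ} (hdisj : Pairwise (fun i j => DisjSupp (v i) (v j))) (c : ι → ℝ)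
    (hc : ∀ i, |c i| = 1) :
    eLpNorm (⇑(Ω (∑ i, v i) - ∑ i, Ω (v i))) q μ ≤
      ENNReal.ofReal (C * ‖∑ i, v i‖) +
        eLpNorm (⇑(Ω (∑ i, c i • v i) - ∑ i, c i • Ω (v i))) q μ := by
  set m := signMultiplier v c
  set x := ∑ i, v i
  set S := ∑ i, c i • v i
  have hm : ∀ᵐ a ∂μ, ‖m a‖ ≤ 1 := ae_norm_signMultiplier_le_one hdisj c fun i => (hc i).le
  have hcc : ∀ i, c i * c i = 1 := fun i => by rw [← abs_mul_abs_self, hc i, one_mul]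
  have hmv : ∀ i, m * (v i : α →ₘ[μ] ℝ) = c i • (v i : α →ₘ[μ] ℝ) := fun i =>
    signMultiplier_mul_of_ae hdisj c i (.of_forall fun _ => id)
  have hmΩ : ∀ i, m * Ω (v i) = c i • Ω (v i) := fun i =>
    signMultiplier_mul_of_ae hdisj c i (hcontr (v i))
  have hS : (S : α →ₘ[μ] ℝ) = m * x := by
    simp only [S, x, AddSubgroup.val_finsetSum]
    exact (AEEqFun.mul_sum_eq_sum_smul hmv).symm
  have hx : (x : α →ₘ[μ] ℝ) = m * S := by
    simp only [S, x, AddSubgroup.val_finsetSum]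
    exact (AEEqFun.mul_sum_smul_eq_sum hmv hcc).symm
  have hsplit : Ω x - ∑ i, Ω (v i) = (Ω x - m * Ω S) + m * (Ω S - ∑ i, c i • Ω (v i)) := by
    rw [← AEEqFun.mulLeftₗ_apply m (_ - _), map_sub, AEEqFun.mulLeftₗ_apply,
      AEEqFun.mulLeftₗ_apply, AEEqFun.mul_sum_smul_eq_sum hmΩ hcc]
    abel
  calc eLpNorm (⇑(Ω x - ∑ i, Ω (v i))) q μ
      = eLpNorm (⇑(Ω x - m * Ω S) + ⇑(m * (Ω S - ∑ i, c i • Ω (v i)))) q μ := by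
        rw [hsplit]; exact eLpNorm_congr_ae (AEEqFun.coeFn_add _ _)
    _ ≤ eLpNorm (⇑(Ω x - m * Ω S)) q μ + eLpNorm (⇑(m * (Ω S - ∑ i, c i • Ω (v i)))) q μ :=
        eLpNorm_add_le (AEEqFun.aestronglyMeasurable _) (AEEqFun.aestronglyMeasurable _) Fact.out
    _ ≤ _ := add_le_add (hΩ.eLpNorm_sub_mul_le hm (Lp.norm_le_of_coe_eq_mul hm hS) hx)
        (AEEqFun.eLpNorm_mul_le hm _)

end MeasureTheory

theorem eLpNorm_omega_sum_le_nabla_general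
    {α : Type*} [MeasurableSpace α] {μ : Measure α}
    {q : ℝ≥0∞} [Fact (1 ≤ q)]
    (Ω : Lp ℝ q μ → (α →ₘ[μ] ℝ)) (CΩ : ℝ)
    (hcen : IsCentralizerWith Ω CΩ) (hcontr : Contractive Ω)
    (n : ℕ) (v : Fin n → Lp ℝ q μ)
    (hdisj : Pairwise (fun i j => DisjSupp (v i) (v j))) :
    eLpNorm (⇑(Ω (∑ i, v i) - ∑ i, Ω (v i))) q μ ≤
      ENNReal.ofReal (CΩ * ‖∑ i, v i‖) + nabla Ω v := by
  obtain ⟨ε, hε⟩ := ENNReal.exists_le_inv_card_mul_sum fun ε : Fin n → Bool =>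
    eLpNorm (⇑(Ω (∑ k, (if ε k then (1 : ℝ) else -1) • v k)
      - ∑ k, (if ε k then (1 : ℝ) else -1) • Ω (v k))) q μ
  have hcard : (Fintype.card (Fin n → Bool) : ℝ≥0∞) = 2 ^ n := by simp
  refine (eLpNorm_omega_sum_le_signed hcen hcontr hdisj (fun k => if ε k then 1 else -1)
    fun k => by split_ifs <;> simp).trans ?_
  rw [nabla, ← hcard]
  gcongr

/-- For a contractive quasi-linear `L_∞`-centralizer `Ω` on `L_p(μ)`
with centralizer constant `CΩ` and any finite normalized disjointly supported family
`v_1, …, v_n`, one has `‖Ω(∑ v_i) - ∑ Ω(v_i)‖_p ≤ CΩ·‖∑ v_i‖_p + ∇_{[(v_i)]}Ω`. -/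
theorem eLpNorm_omega_sum_le_nabla
    {α : Type*} [MeasurableSpace α] {μ : Measure α} [SigmaFinite μ]
    {q : ℝ≥0∞} [Fact (1 ≤ q)] (hq : q ≠ ∞)
    (Ω : Lp ℝ q μ → (α →ₘ[μ] ℝ)) (CΩ : ℝ)
    (hcen : IsCentralizerWith Ω CΩ) (hql : L0QuasiLinear Ω) (hcontr : Contractive Ω)
    (n : ℕ) (v : Fin n → Lp ℝ q μ) (hnorm : ∀ i, ‖v i‖ = 1)
    (hdisj : Pairwise (fun i j => DisjSupp (v i) (v j))) :
    eLpNorm (⇑(Ω (∑ i, v i) - ∑ i, Ω (v i))) q μ ≤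
      ENNReal.ofReal (CΩ * ‖∑ i, v i‖) + nabla Ω v :=
  eLpNorm_omega_sum_le_nabla_general Ω CΩ hcen hcontr n v hdisj
end
end

section
/- Let (Σ,μ) be a σ-finite measure space, 1 ≤ p < ∞, let Ω be a contractive, quasi-linear L∞-centralizer on L_p(μ), and let (u_n) be a normalized sequence of pairwise disjointly supported functions in L_p(μ). Suppose there is a constant C > 0 such that for every finitely supported scalar sequence λ = (λ_k) one has ∇_{[λu]}Ω ≤ C‖λ‖_p (λu denoting the tuple of nonzero vectors among (λ_k u_k)). Then the restriction of Ω to the closed linear span of {u_n} is trivial. -/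
open MeasureTheory
open scoped ENNReal

noncomputable section

/-!
Replace the supports of the `u k` by disjoint measurable sets `T k`. For a finite combination
`w = ∑ λ_k u_k` and a choice of signs `ε`, the `±1`-valued function equal to `ε_k` on `T k` is an
`L_∞` multiplier carrying `∑ ±λ_k u_k` to `w` and, by contractivity, `∑ ±Ω(λ_k u_k)` to
`∑ λ_k Ω(u_k)`. The centralizer estimate thus bounds `‖Ω w - ∑ λ_k Ω(u_k)‖` by `|C_Ω| ‖w‖` plus
the defect of `Ω` on `∑ ±λ_k u_k`; averaging over `ε` gives `|C_Ω| ‖w‖ + ∇_{[λu]}Ω`, which is at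
most `(|C_Ω| + C) ‖w‖` because `‖w‖ = ‖λ‖_p`.

On the closed span, `x` agrees on `T k` with `c_k(x) u_k` for a linear functional `c_k`, and the
linear map `L x := c_k(x) Ω(u_k)` on `T k` is the candidate. Restricting `x` to
`T 0 ∪ … ∪ T (N-1)` is again an `L_∞` multiplication, so the centralizer estimate and the finite
case bound `Ω x - L x` on these sets uniformly in `N`, and Fatou's lemma bounds it everywhere.
-/

open Set Filter Function

/-- `nabla Ω b` weights `b k` by `boolSign (ε k)`. -/
def boolSign (e : Bool) : ℝ := if e then 1 else -1

theorem boolSign_mul_self (e : Bool) : boolSign e * boolSign e = 1 := by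
  cases e <;> norm_num [boolSign]

theorem Finset.apply_sum_of_pairwise_eq_zero {ι M N : Type*} [AddCommMonoid M] [AddCommMonoid N]
    {F : M → N} (hF : F 0 = 0) (s : Finset ι) {g : ι → M}
    (hg : ∀ i ∈ s, ∀ j ∈ s, i ≠ j → g i = 0 ∨ g j = 0) :
    F (∑ k ∈ s, g k) = ∑ k ∈ s, F (g k) := by
  classical
  induction s using Finset.induction_on with
  | empty => simp [hF]
  | insert i s hi ih =>
    rw [Finset.sum_insert hi, Finset.sum_insert hi]
    by_cases hgi : g i = 0
    · rw [hgi, zero_add, hF, zero_add,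
        ih fun j hj k hk => hg j (Finset.mem_insert_of_mem hj) k (Finset.mem_insert_of_mem hk)]
    · have hzero : ∀ k ∈ s, g k = 0 := fun k hk =>
        (hg i (Finset.mem_insert_self i s) k (Finset.mem_insert_of_mem hk)
          (ne_of_mem_of_not_mem hk hi).symm).resolve_left hgi
      rw [Finset.sum_eq_zero hzero, add_zero,
        Finset.sum_eq_zero fun k hk => by rw [hzero k hk, hF], add_zero]

theorem ContinuousLinearMap.mem_of_mem_topologicalClosure_span {R M N : Type*} [Semiring R]
    [TopologicalSpace M] [AddCommMonoid M] [Module R M] [ContinuousConstSMul R M] [ContinuousAdd M]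
    [TopologicalSpace N] [AddCommMonoid N] [Module R N] {ι : Type*} {v : ι → M}
    (P : M →L[R] N) {V : Submodule R N} (hV : IsClosed (V : Set N)) (hv : ∀ i, P (v i) ∈ V)
    {x : M} (hx : x ∈ (Submodule.span R (range v)).topologicalClosure) : P x ∈ V :=
  Submodule.topologicalClosure_minimal _ (t := V.comap P.toLinearMap)
    (Submodule.span_le.2 (range_subset_iff.2 hv)) (hV.preimage P.continuous) hx

theorem LinearMap.exists_smul_eq_of_mem_span_singleton {K M N : Type*} [Field K]
    [AddCommGroup M] [Module K M] [AddCommGroup N] [Module K N] (P : M →ₗ[K] N) {v : N}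
    (hv : v ≠ 0) {E : Submodule K M} (hE : ∀ x ∈ E, P x ∈ K ∙ v) :
    ∃ c : E →ₗ[K] K, ∀ x : E, c x • v = P x :=
  ⟨(LinearEquiv.coord K N v hv).toLinearMap ∘ₗ (P ∘ₗ E.subtype).codRestrict _ fun x => hE x x.2,
    fun _ => LinearEquiv.coord_apply_smul _ _ _ hv _⟩

section SignPattern

variable {α ι : Type*} {T : ι → Set α} {ε : ι → Bool} {a : α}

open Classical in
def signPattern (T : ι → Set α) (ε : ι → Bool) (a : α) : ℝ :=
  if a ∈ ⋃ k, ⋃ (_ : ε k = false), T k then -1 else 1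

theorem measurable_signPattern [MeasurableSpace α] [Countable ι]
    (hTm : ∀ k, MeasurableSet (T k)) : Measurable (signPattern T ε) := by
  unfold signPattern
  exact Measurable.ite (.iUnion fun k => .iUnion fun _ => hTm k) measurable_const measurable_const

theorem abs_signPattern : |signPattern T ε a| = 1 := by
  unfold signPattern; split_ifs <;> norm_num

theorem signPattern_of_mem (hTd : Pairwise (Disjoint on T)) {k : ι} (ha : a ∈ T k) :
    signPattern T ε a = boolSign (ε k) := by
  have hmem : (a ∈ ⋃ j, ⋃ (_ : ε j = false), T j) ↔ ε k = false := by
    simp only [mem_iUnion, exists_prop]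
    refine ⟨fun ⟨j, hj, haj⟩ => ?_, fun hk => ⟨k, hk, ha⟩⟩
    obtain rfl : j = k := by_contra fun hjk => (hTd hjk).ne_of_mem haj ha rfl
    exact hj
  unfold signPattern boolSign
  cases hk : ε k <;> simp_all

theorem signPattern_mul_boolSign_mul (hTd : Pairwise (Disjoint on T)) {k : ι} {c : ℝ}
    (hc : a ∉ T k → c = 0) : signPattern T ε a * (boolSign (ε k) * c) = c := by
  by_cases ha : a ∈ T k
  · rw [signPattern_of_mem hTd ha, ← mul_assoc, boolSign_mul_self, one_mul]
  · simp [hc ha]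

theorem sum_eq_signPattern_mul_sum [Fintype ι] (hTd : Pairwise (Disjoint on T)) (ε : ι → Bool)
    {g : ι → ℝ} (hg : ∀ k, a ∉ T k → g k = 0) :
    ∑ k, g k = signPattern T ε a * ∑ k, boolSign (ε k) * g k := by
  rw [Finset.mul_sum]
  exact Finset.sum_congr rfl fun k _ => (signPattern_mul_boolSign_mul hTd (hg k)).symm

end SignPattern

section Glue

variable {α ι : Type*} {T : ι → Set α} {g : ι → α → ℝ} {a : α}

def glue (T : ι → Set α) (g : ι → α → ℝ) (a : α) : ℝ :=
  ∑' k, (T k).indicator (g k) a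

theorem glue_of_mem (hTd : Pairwise (Disjoint on T)) {k : ι} (ha : a ∈ T k) :
    glue T g a = g k a := by
  rw [glue, tsum_eq_single k fun j hj =>
    indicator_of_notMem (fun haj => (hTd hj).ne_of_mem haj ha rfl) _, indicator_of_mem ha]

theorem glue_of_notMem (ha : a ∉ ⋃ k, T k) : glue T g a = 0 := by
  rw [glue, tsum_congr fun k => indicator_of_notMem (fun h => ha (mem_iUnion.2 ⟨k, h⟩)) _,
    tsum_zero]

theorem glue_add (hTd : Pairwise (Disjoint on T)) (g g' : ι → α → ℝ) :
    glue T (g + g') = glue T g + glue T g' := by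
  funext a
  by_cases ha : a ∈ ⋃ k, T k
  · obtain ⟨k, hk⟩ := mem_iUnion.1 ha
    simp only [Pi.add_apply, glue_of_mem hTd hk]
  · simp only [Pi.add_apply, glue_of_notMem ha, add_zero]

theorem glue_smul (c : ℝ) (g : ι → α → ℝ) : glue T (c • g) = c • glue T g := by
  funext a
  rw [Pi.smul_apply, smul_eq_mul, glue, glue, ← tsum_mul_left]
  exact tsum_congr fun k => indicator_const_smul_apply (T k) c (g k) a

theorem indicator_biUnion_glue (hTd : Pairwise (Disjoint on T)) (s : Finset ι)
    (hg : ∀ k, a ∉ T k → g k a = 0) :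
    (⋃ k ∈ s, T k).indicator (glue T g) a = ∑ k ∈ s, g k a := by
  rw [Finset.indicator_biUnion_apply s T fun i _ j _ hij => hTd hij]
  refine Finset.sum_congr rfl fun k _ => ?_
  by_cases ha : a ∈ T k
  · rw [indicator_of_mem ha, glue_of_mem hTd ha]
  · rw [indicator_of_notMem ha, hg k ha]

end Glue

section

variable {α : Type*} [MeasurableSpace α] {μ : Measure α} {q : ℝ≥0∞}

theorem IsCentralizerWith.eLpNorm_sub_mul_le {Ω : Lp ℝ q μ → (α →ₘ[μ] ℝ)} {CΩ : ℝ}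
    (hcen : IsCentralizerWith Ω CΩ) {h : α → ℝ} (hm : AEStronglyMeasurable h μ)
    (hb : ∀ a, |h a| ≤ 1) {x y : Lp ℝ q μ} (hxy : ⇑y =ᵐ[μ] h * ⇑x) :
    eLpNorm (⇑(Ω y) - h * ⇑(Ω x)) q μ ≤ ENNReal.ofReal (|CΩ| * ‖x‖) := by
  set f : α →ₘ[μ] ℝ := AEEqFun.mk h hm
  have hf : ⇑f =ᵐ[μ] h := AEEqFun.coeFn_mk h hm
  have hf_top : eLpNorm (⇑f) ⊤ μ ≤ 1 := by
    rw [eLpNorm_congr_ae hf, eLpNorm_exponent_top]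
    exact (eLpNormEssSup_le_of_ae_bound (C := 1) (.of_forall hb)).trans (by simp)
  have hf_mem : f ∈ Lp ℝ ⊤ μ :=
    Lp.mem_Lp_iff_eLpNorm_lt_top.mpr (hf_top.trans_lt ENNReal.one_lt_top)
  have hyf : (y : α →ₘ[μ] ℝ) = f * x := AEEqFun.ext <| by
    filter_upwards [hxy, AEEqFun.coeFn_mul f x, hf] with a hya hmul hfa
    rw [hya, hmul, Pi.mul_apply, Pi.mul_apply, hfa]
  have hf_norm : (eLpNorm (⇑f) ⊤ μ).toReal ≤ 1 := ENNReal.toReal_le_of_le_ofReal zero_le_one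
    (by simpa using hf_top)
  calc eLpNorm (⇑(Ω y) - h * ⇑(Ω x)) q μ = eLpNorm ⇑(Ω y - f * Ω x) q μ := by
        refine eLpNorm_congr_ae ?_
        filter_upwards [AEEqFun.coeFn_sub (Ω y) (f * Ω x), AEEqFun.coeFn_mul f (Ω x), hf]
          with a hsub hmul hfa
        rw [Pi.sub_apply, Pi.mul_apply, hsub, Pi.sub_apply, hmul, Pi.mul_apply, hfa]
    _ ≤ ENNReal.ofReal (CΩ * (eLpNorm (⇑f) ⊤ μ).toReal * ‖x‖) := hcen.2 f hf_mem x y hyf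
    _ ≤ ENNReal.ofReal (|CΩ| * ‖x‖) := by
        refine ENNReal.ofReal_le_ofReal (mul_le_mul_of_nonneg_right ?_ ENNReal.toReal_nonneg)
        calc CΩ * (eLpNorm (⇑f) ⊤ μ).toReal ≤ |CΩ| * (eLpNorm (⇑f) ⊤ μ).toReal := by
              gcongr; exact le_abs_self CΩ
          _ ≤ |CΩ| := mul_le_of_le_one_right (abs_nonneg CΩ) hf_norm

theorem Contractive.ae_eq_zero_of_notMem {Ω : Lp ℝ q μ → (α →ₘ[μ] ℝ)} (hcontr : Contractive Ω)
    {s : Set α} {x : Lp ℝ q μ} (hx : ∀ᵐ a ∂μ, a ∉ s → x a = 0) : ∀ᵐ a ∂μ, a ∉ s → Ω x a = 0 := by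
  filter_upwards [hcontr x, hx] with a hΩ hxa ha using hΩ (hxa ha)

section Signs

variable [Fact (1 ≤ q)] {Ω : Lp ℝ q μ → (α →ₘ[μ] ℝ)} {CΩ : ℝ}

theorem IsCentralizerWith.eLpNorm_sub_le_of_ae_eq_mul (hcen : IsCentralizerWith Ω CΩ)
    {h : α → ℝ} (hm : Measurable h) (habs : ∀ a, |h a| = 1) {x y : Lp ℝ q μ}
    {X Y : α →ₘ[μ] ℝ} (hxy : ⇑y =ᵐ[μ] h * ⇑x) (hXY : ⇑Y =ᵐ[μ] h * ⇑X) :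
    eLpNorm ⇑(Ω y - Y) q μ ≤ ENNReal.ofReal (|CΩ| * ‖y‖) + eLpNorm ⇑(Ω x - X) q μ := by
  have hnorm : ‖x‖ = ‖y‖ := by
    rw [Lp.norm_def, Lp.norm_def]
    congr 1
    refine eLpNorm_congr_norm_ae ?_
    filter_upwards [hxy] with a ha
    rw [ha, Pi.mul_apply, norm_mul, Real.norm_eq_abs (h a), habs, one_mul]
  have hdecomp : ⇑(Ω y - Y) =ᵐ[μ] (⇑(Ω y) - h * ⇑(Ω x)) + h * ⇑(Ω x - X) := by
    filter_upwards [AEEqFun.coeFn_sub (Ω y) Y, AEEqFun.coeFn_sub (Ω x) X, hXY] with a h1 h2 h3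
    simp only [h1, h2, h3, Pi.add_apply, Pi.sub_apply, Pi.mul_apply]
    ring
  have hmul : eLpNorm (h * ⇑(Ω x - X)) q μ = eLpNorm ⇑(Ω x - X) q μ :=
    eLpNorm_congr_norm_ae <| .of_forall fun a => by
      rw [Pi.mul_apply, norm_mul, Real.norm_eq_abs, habs, one_mul]
  calc eLpNorm ⇑(Ω y - Y) q μ
      ≤ eLpNorm (⇑(Ω y) - h * ⇑(Ω x)) q μ + eLpNorm (h * ⇑(Ω x - X)) q μ := by
        rw [eLpNorm_congr_ae hdecomp]
        exact eLpNorm_add_le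
          ((AEEqFun.aestronglyMeasurable _).sub
            (hm.aestronglyMeasurable.mul (AEEqFun.aestronglyMeasurable _)))
          (hm.aestronglyMeasurable.mul (AEEqFun.aestronglyMeasurable _)) Fact.out
    _ ≤ _ := by
        rw [hmul, ← hnorm]
        gcongr
        exact hcen.eLpNorm_sub_mul_le hm.aestronglyMeasurable (fun a => (habs a).le) hxy

/-- Multiplying by the sign pattern of `ε` turns `∑ ± b k` into `∑ b k` and, by contractivity,
`∑ ± Ω (b k)` into `∑ Ω (b k)`. -/
theorem eLpNorm_sub_sum_le_of_signs (hcen : IsCentralizerWith Ω CΩ) (hcontr : Contractive Ω)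
    {ι : Type*} [Fintype ι] {T : ι → Set α} (hTm : ∀ k, MeasurableSet (T k))
    (hTd : Pairwise (Disjoint on T)) {b : ι → Lp ℝ q μ}
    (hbT : ∀ k, ∀ᵐ a ∂μ, a ∉ T k → b k a = 0) (ε : ι → Bool) :
    eLpNorm ⇑(Ω (∑ k, b k) - ∑ k, Ω (b k)) q μ ≤ ENNReal.ofReal (|CΩ| * ‖∑ k, b k‖) +
      eLpNorm ⇑(Ω (∑ k, boolSign (ε k) • b k) - ∑ k, boolSign (ε k) • Ω (b k)) q μ := by
  refine hcen.eLpNorm_sub_le_of_ae_eq_mul (measurable_signPattern (ε := ε) hTm)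
    (fun _ => abs_signPattern) ?_ ?_
  · filter_upwards [Lp.coeFn_fun_finsetSum Finset.univ b,
      Lp.coeFn_fun_finsetSum Finset.univ fun k => boolSign (ε k) • b k,
      ae_all_iff.2 fun k => Lp.coeFn_smul (boolSign (ε k)) (b k), ae_all_iff.2 hbT]
      with a hb hx hsmul hbTa
    rw [hb, Pi.mul_apply, hx, sum_eq_signPattern_mul_sum hTd ε (hbTa ·)]
    simp only [hsmul, Pi.smul_apply, smul_eq_mul]
  · filter_upwards [AEEqFun.coeFn_finsetSum Finset.univ fun k => Ω (b k),
      AEEqFun.coeFn_finsetSum Finset.univ fun k => boolSign (ε k) • Ω (b k),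
      ae_all_iff.2 fun k => AEEqFun.coeFn_smul (boolSign (ε k)) (Ω (b k)),
      ae_all_iff.2 fun k => hcontr.ae_eq_zero_of_notMem (hbT k)]
      with a hΩb hΩx hsmul hΩT
    simp only [hΩb, hΩx, Finset.sum_apply, Pi.mul_apply, hsmul, Pi.smul_apply, smul_eq_mul]
    exact sum_eq_signPattern_mul_sum hTd ε (hΩT ·)

theorem eLpNorm_sub_sum_le_add_nabla (hcen : IsCentralizerWith Ω CΩ) (hcontr : Contractive Ω)
    {n : ℕ} {T : Fin n → Set α} (hTm : ∀ k, MeasurableSet (T k))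
    (hTd : Pairwise (Disjoint on T)) {b : Fin n → Lp ℝ q μ}
    (hbT : ∀ k, ∀ᵐ a ∂μ, a ∉ T k → b k a = 0) :
    eLpNorm ⇑(Ω (∑ k, b k) - ∑ k, Ω (b k)) q μ ≤
      ENNReal.ofReal (|CΩ| * ‖∑ k, b k‖) + nabla Ω b := by
  have h2n : ((2 : ℝ≥0∞) ^ n)⁻¹ * (Fintype.card (Fin n → Bool) : ℝ≥0∞) = 1 := by
    simp [ENNReal.inv_mul_cancel]
  calc eLpNorm ⇑(Ω (∑ k, b k) - ∑ k, Ω (b k)) q μ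
      = ((2 : ℝ≥0∞) ^ n)⁻¹ *
          ∑ _ε : Fin n → Bool, eLpNorm ⇑(Ω (∑ k, b k) - ∑ k, Ω (b k)) q μ := by
        rw [Finset.sum_const, Finset.card_univ, nsmul_eq_mul, ← mul_assoc, h2n, one_mul]
    _ ≤ ((2 : ℝ≥0∞) ^ n)⁻¹ * ∑ ε : Fin n → Bool, (ENNReal.ofReal (|CΩ| * ‖∑ k, b k‖) +
          eLpNorm ⇑(Ω (∑ k, boolSign (ε k) • b k) - ∑ k, boolSign (ε k) • Ω (b k)) q μ) := by
        gcongr with ε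
        exact eLpNorm_sub_sum_le_of_signs hcen hcontr hTm hTd hbT ε
    _ = ENNReal.ofReal (|CΩ| * ‖∑ k, b k‖) + nabla Ω b := by
        rw [Finset.sum_add_distrib, Finset.sum_const, Finset.card_univ, nsmul_eq_mul, mul_add,
          ← mul_assoc, h2n, one_mul]
        rfl

end Signs

theorem eLpNorm_sum_rpow_of_ae_pairwise {ι : Type*} (s : Finset ι) {f : ι → α → ℝ}
    (hf : ∀ k, AEStronglyMeasurable (f k) μ)
    (hdisj : ∀ᵐ a ∂μ, Pairwise fun i j => f i a = 0 ∨ f j a = 0) (hq0 : q ≠ 0) (hq : q ≠ ∞) :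
    eLpNorm (∑ k ∈ s, f k) q μ ^ q.toReal = ∑ k ∈ s, eLpNorm (f k) q μ ^ q.toReal := by
  have hp : 0 < q.toReal := ENNReal.toReal_pos hq0 hq
  have hpow : ∀ g : α → ℝ, eLpNorm g q μ ^ q.toReal = ∫⁻ a, ‖g a‖ₑ ^ q.toReal ∂μ := fun g => by
    rw [eLpNorm_eq_eLpNorm' hq0 hq, lintegral_rpow_enorm_eq_rpow_eLpNorm' hp]
  simp only [hpow]
  rw [← lintegral_finsetSum' s fun k _ => (hf k).enorm.pow_const _]
  refine lintegral_congr_ae ?_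
  filter_upwards [hdisj] with a ha
  rw [Finset.sum_apply]
  exact Finset.apply_sum_of_pairwise_eq_zero (F := fun c : ℝ => ‖c‖ₑ ^ q.toReal) (by simp [hp]) s
    fun i _ j _ hij => ha hij

theorem ae_pairwise_of_pairwise_disjSupp {ι : Type*} [Countable ι] {u : ι → Lp ℝ q μ}
    (hdisj : Pairwise fun i j => DisjSupp (u i) (u j)) :
    ∀ᵐ a ∂μ, Pairwise fun i j => u i a = 0 ∨ u j a = 0 := by
  have h : ∀ i j, ∀ᵐ a ∂μ, i ≠ j → u i a = 0 ∨ u j a = 0 := fun i j => by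
    by_cases hij : i = j
    · exact .of_forall fun _ h => absurd hij h
    · filter_upwards [hdisj hij] with a ha using fun _ => ha
  exact ae_all_iff.2 fun i => ae_all_iff.2 fun j => h i j

theorem norm_sum_smul_of_disjSupp [Fact (1 ≤ q)] (hq : q ≠ ∞) {ι : Type*} [Countable ι]
    {u : ι → Lp ℝ q μ} (hnorm : ∀ k, ‖u k‖ = 1) (hdisj : Pairwise fun i j => DisjSupp (u i) (u j))
    (s : Finset ι) (lam : ι → ℝ) :
    ‖∑ k ∈ s, lam k • u k‖ = (∑ k ∈ s, |lam k| ^ q.toReal) ^ (1 / q.toReal) := by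
  have hq0 : q ≠ 0 := (zero_lt_one.trans_le Fact.out).ne'
  have hp : 0 < q.toReal := ENNReal.toReal_pos hq0 hq
  have hsmul : ∀ᵐ a ∂μ, ∀ k, (lam k • u k) a = lam k * u k a :=
    ae_all_iff.2 fun k => Lp.coeFn_smul (lam k) (u k)
  have hpow : eLpNorm ⇑(∑ k ∈ s, lam k • u k) q μ ^ q.toReal = ∑ k ∈ s, ‖lam k‖ₑ ^ q.toReal := by
    rw [eLpNorm_congr_ae (Lp.coeFn_finsetSum s _), eLpNorm_sum_rpow_of_ae_pairwise s
      (fun k => (Lp.aestronglyMeasurable _)) ?_ hq0 hq]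
    · refine Finset.sum_congr rfl fun k _ => ?_
      rw [← Lp.enorm_def, enorm_smul, ← ofReal_norm (u k), hnorm, ENNReal.ofReal_one, mul_one]
    · filter_upwards [ae_pairwise_of_pairwise_disjSupp hdisj, hsmul] with a ha hs i j hij
      simp only [hs]
      rcases ha hij with h | h <;> simp [h]
  have heLp : eLpNorm ⇑(∑ k ∈ s, lam k • u k) q μ =
      (∑ k ∈ s, ‖lam k‖ₑ ^ q.toReal) ^ (1 / q.toReal) := by
    rw [← hpow, ← ENNReal.rpow_mul, mul_one_div_cancel hp.ne', ENNReal.rpow_one]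
  rw [Lp.norm_def, heLp, ← ENNReal.toReal_rpow, ENNReal.toReal_sum fun k _ =>
    ENNReal.rpow_ne_top_of_nonneg hp.le enorm_ne_top]
  simp only [← ENNReal.toReal_rpow, toReal_enorm, Real.norm_eq_abs]

theorem exists_pairwise_disjoint_supports {u : ℕ → Lp ℝ q μ}
    (hdisj : Pairwise fun i j => DisjSupp (u i) (u j)) :
    ∃ T : ℕ → Set α, (∀ k, MeasurableSet (T k)) ∧ Pairwise (Disjoint on T) ∧
      ∀ k, ∀ᵐ a ∂μ, a ∉ T k → u k a = 0 := by
  have hm : ∀ k, MeasurableSet {a | u k a ≠ 0} := fun k =>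
    ((Lp.stronglyMeasurable (u k)).measurable (measurableSet_singleton 0)).compl
  refine ⟨disjointed fun k => {a | u k a ≠ 0}, .disjointed hm, disjoint_disjointed _, fun k => ?_⟩
  filter_upwards [ae_pairwise_of_pairwise_disjSupp hdisj] with a ha hak
  by_contra hne
  simp only [disjointed_eq_inter_compl, mem_inter_iff, mem_ofPred_eq, mem_iInter, mem_compl_iff,
    not_and, not_forall, not_not] at hak
  obtain ⟨j, hjk, hj⟩ := hak hne
  exact (ha hjk.ne').elim hne hj

section IndicatorL

variable [Fact (1 ≤ q)] {s : Set α}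

def indicatorL (hs : MeasurableSet s) : Lp ℝ q μ →L[ℝ] Lp ℝ q μ :=
  (ContinuousLinearMap.mul ℝ ℝ).holderL μ ∞ q q ((memLp_top_const (1 : ℝ)).indicator hs).toLp

theorem coeFn_indicatorL (hs : MeasurableSet s) (x : Lp ℝ q μ) :
    ⇑(indicatorL hs x) =ᵐ[μ] s.indicator ⇑x := by
  set f : Lp ℝ ∞ μ := ((memLp_top_const (μ := μ) (1 : ℝ)).indicator hs).toLp
  have hf : ⇑f =ᵐ[μ] s.indicator 1 := MemLp.coeFn_toLp _
  have hmul : ⇑(indicatorL hs x) =ᵐ[μ] fun a => f a * x a :=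
    ContinuousLinearMap.coeFn_holder (ContinuousLinearMap.mul ℝ ℝ) f x
  filter_upwards [hmul, hf] with a hmula hfa
  rw [hmula, hfa]
  by_cases ha : a ∈ s <;> simp [ha]

theorem indicatorL_eq_self (hs : MeasurableSet s) {x : Lp ℝ q μ}
    (hx : ∀ᵐ a ∂μ, a ∉ s → x a = 0) : indicatorL hs x = x :=
  Lp.ext <| by
    filter_upwards [coeFn_indicatorL hs x, hx] with a h1 h2
    by_cases ha : a ∈ s
    · rw [h1, indicator_of_mem ha]
    · rw [h1, indicator_of_notMem ha, h2 ha]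

theorem indicatorL_eq_zero (hs : MeasurableSet s) {x : Lp ℝ q μ}
    (hx : ∀ᵐ a ∂μ, a ∈ s → x a = 0) : indicatorL hs x = 0 :=
  Lp.ext <| by
    filter_upwards [coeFn_indicatorL hs x, hx, Lp.coeFn_zero ℝ q μ] with a h1 h2 h3
    by_cases ha : a ∈ s
    · rw [h1, indicator_of_mem ha, h2 ha, h3, Pi.zero_apply]
    · rw [h1, indicator_of_notMem ha, h3, Pi.zero_apply]

theorem coeFn_sum_indicatorL {ι : Type*} {T : ι → Set α} (hTm : ∀ k, MeasurableSet (T k))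
    (hTd : Pairwise (Disjoint on T)) (t : Finset ι) (x : Lp ℝ q μ) :
    ⇑(∑ k ∈ t, indicatorL (hTm k) x) =ᵐ[μ] (⋃ k ∈ t, T k).indicator ⇑x := by
  filter_upwards [Lp.coeFn_fun_finsetSum t fun k => indicatorL (hTm k) x,
    (eventually_all_finset t).2 fun k _ => coeFn_indicatorL (hTm k) x] with a hsum hk
  rw [hsum, Finset.indicator_biUnion_apply t T fun i _ j _ hij => hTd hij]
  exact Finset.sum_congr rfl hk

end IndicatorL

section GlueMeasurable

variable {ι : Type*} {T : ι → Set α} {g : ι → α → ℝ}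

theorem measurable_glue [Countable ι] (hTm : ∀ k, MeasurableSet (T k))
    (hg : ∀ k, Measurable (g k)) : Measurable (glue T g) :=
  Measurable.tsum fun k => (hg k).indicator (hTm k)

theorem exists_linearMap_coeFn_eq_glue [Countable ι] {M : Type*} [AddCommGroup M] [Module ℝ M]
    (hTm : ∀ k, MeasurableSet (T k)) (hTd : Pairwise (Disjoint on T)) (c : ι → M →ₗ[ℝ] ℝ)
    (hg : ∀ k, Measurable (g k)) :
    ∃ L : M →ₗ[ℝ] (α →ₘ[μ] ℝ), ∀ x, ⇑(L x) =ᵐ[μ] glue T fun k => c k x • g k := by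
  have hm : ∀ x, Measurable (glue T fun k => c k x • g k) := fun x =>
    measurable_glue hTm fun k => (hg k).const_smul (c k x)
  refine ⟨{ toFun := fun x => AEEqFun.mk _ (hm x).aestronglyMeasurable
            map_add' := fun x y => ?_
            map_smul' := fun r x => ?_ }, fun x => AEEqFun.coeFn_mk _ _⟩
  · simp only [map_add, add_smul, AEEqFun.mk_add_mk]
    congr 1
    exact glue_add hTd _ _
  · simp only [map_smul, smul_eq_mul, mul_smul, RingHom.id_apply, AEEqFun.smul_mk]
    congr 1
    exact glue_smul r fun k => c k x • g k

end GlueMeasurable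

theorem eLpNorm_le_of_forall_indicator_biUnion_le {T : ℕ → Set α}
    (hTm : ∀ k, MeasurableSet (T k)) {f : α → ℝ} (hf : AEStronglyMeasurable f μ)
    (hf0 : ∀ᵐ a ∂μ, a ∉ ⋃ k, T k → f a = 0) {R : ℝ≥0∞}
    (hR : ∀ N, eLpNorm ((⋃ k ∈ Finset.range N, T k).indicator f) q μ ≤ R) :
    eLpNorm f q μ ≤ R := by
  set S := fun N => ⋃ k ∈ Finset.range N, T k
  have hS : Monotone S := fun M N hMN =>
    biUnion_subset_biUnion_left (Finset.coe_subset.2 (Finset.range_mono hMN))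
  have hSU : ⋃ N, S N = ⋃ k, T k := by
    ext a
    simp only [S, mem_iUnion, Finset.mem_range, exists_prop]
    exact ⟨fun ⟨_, k, _, hk⟩ => ⟨k, hk⟩, fun ⟨k, hk⟩ => ⟨k + 1, k, k.lt_succ_self, hk⟩⟩
  have hlim : ∀ᵐ a ∂μ, Tendsto (fun N => (S N).indicator f a) atTop (nhds (f a)) := by
    filter_upwards [hf0] with a ha
    have hfa : (⋃ N, S N).indicator f a = f a := by
      by_cases h : a ∈ ⋃ k, T k
      · rw [hSU, indicator_of_mem h]
      · rw [hSU, indicator_of_notMem h, ha h]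
    exact hfa ▸ (hS.tendsto_indicator S f a).mono_right (pure_le_nhds _)
  calc eLpNorm f q μ ≤ atTop.liminf fun N => eLpNorm ((S N).indicator f) q μ :=
        Lp.eLpNorm_lim_le_liminf_eLpNorm
          (fun N => hf.indicator (Finset.measurableSet_biUnion _ fun k _ => hTm k)) f hlim
    _ ≤ R := liminf_le_of_frequently_le' (.of_forall hR)

section ClosedSpan

variable [Fact (1 ≤ q)] {u : ℕ → Lp ℝ q μ} {T : ℕ → Set α}

theorem indicatorL_mem_span_singleton (hTm : ∀ k, MeasurableSet (T k))
    (hTd : Pairwise (Disjoint on T)) (huT : ∀ k, ∀ᵐ a ∂μ, a ∉ T k → u k a = 0) {x : Lp ℝ q μ}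
    (hx : x ∈ (Submodule.span ℝ (range u)).topologicalClosure) (k : ℕ) :
    indicatorL (hTm k) x ∈ ℝ ∙ u k := by
  refine (indicatorL (hTm k)).mem_of_mem_topologicalClosure_span
    (Submodule.closed_of_finiteDimensional _) (fun j => ?_) hx
  rcases eq_or_ne j k with rfl | hjk
  · rw [indicatorL_eq_self (hTm j) (huT j)]
    exact Submodule.mem_span_singleton_self _
  · rw [indicatorL_eq_zero (hTm k) ?_]
    · exact Submodule.zero_mem _
    filter_upwards [huT j] with a ha hak using ha fun haj => (hTd hjk).ne_of_mem haj hak rfl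

theorem ae_eq_zero_of_mem_topologicalClosure_span (hTm : ∀ k, MeasurableSet (T k))
    (huT : ∀ k, ∀ᵐ a ∂μ, a ∉ T k → u k a = 0) {x : Lp ℝ q μ}
    (hx : x ∈ (Submodule.span ℝ (range u)).topologicalClosure) :
    ∀ᵐ a ∂μ, a ∉ ⋃ k, T k → x a = 0 := by
  have hA : MeasurableSet (⋃ k, T k)ᶜ := (MeasurableSet.iUnion hTm).compl
  have hPx : indicatorL hA x = 0 := by
    refine (indicatorL hA).mem_of_mem_topologicalClosure_span (V := ⊥) isClosed_singleton
      (fun j => ?_) hx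
    refine indicatorL_eq_zero hA ?_
    filter_upwards [huT j] with a ha haA using ha fun hj => haA (mem_iUnion.2 ⟨j, hj⟩)
  have hPx0 : ⇑(indicatorL hA x) =ᵐ[μ] 0 := by
    rw [hPx]
    exact Lp.coeFn_zero ℝ q μ
  filter_upwards [coeFn_indicatorL hA x, hPx0] with a h1 h2 ha
  rw [← indicator_of_mem (mem_compl ha) (⇑x), ← h1, h2, Pi.zero_apply]

end ClosedSpan

theorem indicator_biUnion_glue_ae_eq_sum {Ω : Lp ℝ q μ → (α →ₘ[μ] ℝ)} (hcontr : Contractive Ω)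
    {u : ℕ → Lp ℝ q μ} {T : ℕ → Set α} (hTd : Pairwise (Disjoint on T))
    (huT : ∀ k, ∀ᵐ a ∂μ, a ∉ T k → u k a = 0) (lam : ℕ → ℝ) (t : Finset ℕ) :
    (⋃ k ∈ t, T k).indicator (glue T fun k => lam k • ⇑(Ω (u k))) =ᵐ[μ]
      ⇑(∑ k ∈ t, lam k • Ω (u k)) := by
  filter_upwards [AEEqFun.coeFn_finsetSum t fun k => lam k • Ω (u k),
    ae_all_iff.2 fun k => AEEqFun.coeFn_smul (lam k) (Ω (u k)),
    ae_all_iff.2 fun k => hcontr.ae_eq_zero_of_notMem (huT k)] with a hsum hsmul hΩT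
  rw [indicator_biUnion_glue hTd t fun k hk => by simp [hΩT k hk], hsum, Finset.sum_apply]
  simp only [hsmul]

section DisjointSequence

variable [Fact (1 ≤ q)] {Ω : Lp ℝ q μ → (α →ₘ[μ] ℝ)} {CΩ : ℝ} {u : ℕ → Lp ℝ q μ}
  {T : ℕ → Set α}

theorem eLpNorm_sub_sum_smul_le (hq : q ≠ ∞) (hcen : IsCentralizerWith Ω CΩ)
    (hcontr : Contractive Ω) (hTm : ∀ k, MeasurableSet (T k)) (hTd : Pairwise (Disjoint on T))
    (huT : ∀ k, ∀ᵐ a ∂μ, a ∉ T k → u k a = 0) (hnorm : ∀ n, ‖u n‖ = 1)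
    (hdisj : Pairwise fun i j => DisjSupp (u i) (u j)) {C : ℝ} (hC : 0 ≤ C)
    (hnabla : ∀ (m : ℕ) (lam : Fin m → ℝ),
      nabla Ω (fun k : Fin m => lam k • u (k : ℕ)) ≤
        ENNReal.ofReal (C * (∑ k : Fin m, |lam k| ^ q.toReal) ^ (1 / q.toReal)))
    (lam : ℕ → ℝ) (N : ℕ) :
    eLpNorm ⇑(Ω (∑ k ∈ Finset.range N, lam k • u k) -
        ∑ k ∈ Finset.range N, lam k • Ω (u k)) q μ ≤
      ENNReal.ofReal ((|CΩ| + C) * ‖∑ k ∈ Finset.range N, lam k • u k‖) := by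
  rw [← Fin.sum_univ_eq_sum_range (fun k => lam k • u k),
    ← Fin.sum_univ_eq_sum_range (fun k => lam k • Ω (u k))]
  have hbT : ∀ k : Fin N, ∀ᵐ a ∂μ, a ∉ T k → (lam k • u k) a = 0 := fun k => by
    filter_upwards [huT k, Lp.coeFn_smul (lam k) (u k)] with a hu hs ha
    rw [hs, Pi.smul_apply, hu ha, smul_zero]
  have hsign := eLpNorm_sub_sum_le_add_nabla hcen hcontr (fun k : Fin N => hTm k)
    (hTd.comp_of_injective Fin.val_injective) hbT
  simp only [hcen.1] at hsign
  have hℓp : ‖∑ k : Fin N, lam k • u k‖ = (∑ k : Fin N, |lam k| ^ q.toReal) ^ (1 / q.toReal) :=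
    norm_sum_smul_of_disjSupp (u := fun k : Fin N => u k) hq (fun k => hnorm k)
      (hdisj.comp_of_injective Fin.val_injective) Finset.univ fun k => lam k
  calc _ ≤ ENNReal.ofReal (|CΩ| * ‖∑ k : Fin N, lam k • u k‖) +
        ENNReal.ofReal (C * ‖∑ k : Fin N, lam k • u k‖) := by
        refine hsign.trans ?_
        rw [hℓp]
        gcongr
        exact hnabla N fun k => lam k
    _ = _ := by
        rw [← ENNReal.ofReal_add (by positivity) (by positivity), add_mul]

theorem eLpNorm_indicator_sub_glue_le (hq : q ≠ ∞) (hcen : IsCentralizerWith Ω CΩ)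
    (hcontr : Contractive Ω) (hTm : ∀ k, MeasurableSet (T k)) (hTd : Pairwise (Disjoint on T))
    (huT : ∀ k, ∀ᵐ a ∂μ, a ∉ T k → u k a = 0) (hnorm : ∀ n, ‖u n‖ = 1)
    (hdisj : Pairwise fun i j => DisjSupp (u i) (u j)) {C : ℝ} (hC : 0 ≤ C)
    (hnabla : ∀ (m : ℕ) (lam : Fin m → ℝ),
      nabla Ω (fun k : Fin m => lam k • u (k : ℕ)) ≤
        ENNReal.ofReal (C * (∑ k : Fin m, |lam k| ^ q.toReal) ^ (1 / q.toReal)))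
    {x : Lp ℝ q μ} {lam : ℕ → ℝ} (hlam : ∀ k, lam k • u k = indicatorL (hTm k) x) (N : ℕ) :
    eLpNorm ((⋃ k ∈ Finset.range N, T k).indicator
        (⇑(Ω x) - glue T fun k => lam k • ⇑(Ω (u k)))) q μ ≤
      ENNReal.ofReal ((2 * |CΩ| + C) * ‖x‖) := by
  classical
  set S := ⋃ k ∈ Finset.range N, T k
  set w := ∑ k ∈ Finset.range N, lam k • u k
  have hSm : Measurable (S.indicator (1 : α → ℝ)) :=
    measurable_const.indicator (Finset.measurableSet_biUnion _ fun k _ => hTm k)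
  have hS1 : ∀ a, |S.indicator (1 : α → ℝ) a| ≤ 1 := fun a => by
    rw [indicator_apply]; split_ifs <;> norm_num
  have hw : ⇑w =ᵐ[μ] S.indicator 1 * ⇑x := by
    rw [show w = _ from Finset.sum_congr rfl fun k _ => hlam k]
    filter_upwards [coeFn_sum_indicatorL hTm hTd (Finset.range N) x] with a ha
    rw [ha, Pi.mul_apply, indicator_apply, indicator_apply]
    split_ifs <;> simp
  have hwx : ‖w‖ ≤ ‖x‖ := by
    rw [Lp.norm_def, Lp.norm_def]
    refine ENNReal.toReal_mono (Lp.eLpNorm_ne_top x) (eLpNorm_mono_ae ?_)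
    filter_upwards [hw] with a ha
    rw [ha, Pi.mul_apply, norm_mul]
    exact mul_le_of_le_one_left (norm_nonneg _) (hS1 a)
  have hdecomp : S.indicator (⇑(Ω x) - glue T fun k => lam k • ⇑(Ω (u k))) =ᵐ[μ]
      -(⇑(Ω w) - S.indicator 1 * ⇑(Ω x)) + ⇑(Ω w - ∑ k ∈ Finset.range N, lam k • Ω (u k)) := by
    filter_upwards [indicator_biUnion_glue_ae_eq_sum hcontr hTd huT lam (Finset.range N),
      AEEqFun.coeFn_sub (Ω w) (∑ k ∈ Finset.range N, lam k • Ω (u k))] with a hglue hsub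
    rw [indicator_sub', Pi.sub_apply, hglue, Pi.add_apply, hsub]
    simp only [Pi.neg_apply, Pi.sub_apply, Pi.mul_apply, indicator_apply, Pi.one_apply]
    split_ifs <;> ring
  calc _ ≤ eLpNorm (⇑(Ω w) - S.indicator 1 * ⇑(Ω x)) q μ +
        eLpNorm ⇑(Ω w - ∑ k ∈ Finset.range N, lam k • Ω (u k)) q μ := by
        rw [eLpNorm_congr_ae hdecomp, ← eLpNorm_neg (⇑(Ω w) - _)]
        exact eLpNorm_add_le (((AEEqFun.aestronglyMeasurable _).sub
          (hSm.aestronglyMeasurable.mul (AEEqFun.aestronglyMeasurable _))).neg)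
          (AEEqFun.aestronglyMeasurable _) Fact.out
    _ ≤ ENNReal.ofReal (|CΩ| * ‖x‖) + ENNReal.ofReal ((|CΩ| + C) * ‖x‖) := by
        refine add_le_add (hcen.eLpNorm_sub_mul_le hSm.aestronglyMeasurable hS1 hw) ?_
        exact (eLpNorm_sub_sum_smul_le hq hcen hcontr hTm hTd huT hnorm hdisj hC hnabla lam N
          ).trans (ENNReal.ofReal_le_ofReal (by gcongr))
    _ = ENNReal.ofReal ((2 * |CΩ| + C) * ‖x‖) := by
        rw [← ENNReal.ofReal_add (by positivity) (by positivity)]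
        ring_nf

end DisjointSequence

end

theorem trivialOn_closedSpan_of_nabla_bound_general
    {α : Type*} [MeasurableSpace α] {μ : Measure α}
    {q : ℝ≥0∞} [Fact (1 ≤ q)] (hq : q ≠ ∞)
    (Ω : Lp ℝ q μ → (α →ₘ[μ] ℝ)) (CΩ : ℝ)
    (hcen : IsCentralizerWith Ω CΩ) (hcontr : Contractive Ω)
    (u : ℕ → Lp ℝ q μ) (hnorm : ∀ n, ‖u n‖ = 1)
    (hdisj : Pairwise (fun i j => DisjSupp (u i) (u j)))
    (C : ℝ) (hC : 0 < C)
    (hnabla : ∀ (m : ℕ) (lam : Fin m → ℝ),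
      nabla Ω (fun k : Fin m => lam k • u (k : ℕ)) ≤
        ENNReal.ofReal (C * (∑ k : Fin m, |lam k| ^ q.toReal) ^ (1 / q.toReal))) :
    L0TrivialOn Ω (Submodule.span ℝ (Set.range u)).topologicalClosure := by
  obtain ⟨T, hTm, hTd, huT⟩ := exists_pairwise_disjoint_supports hdisj
  have hu0 : ∀ k, u k ≠ 0 := fun k hk => by simpa [hk] using hnorm k
  choose c hc using fun k => (indicatorL (hTm k)).toLinearMap.exists_smul_eq_of_mem_span_singleton
    (hu0 k) fun x hx => indicatorL_mem_span_singleton hTm hTd huT hx k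
  obtain ⟨L, hL⟩ := exists_linearMap_coeFn_eq_glue (μ := μ) hTm hTd c
    fun k => (Ω (u k)).stronglyMeasurable.measurable
  refine ⟨L, 2 * |CΩ| + C, by positivity, fun x => ?_⟩
  have hdiff : ⇑(Ω x - L x) =ᵐ[μ] ⇑(Ω x) - glue T fun k => c k x • ⇑(Ω (u k)) :=
    (AEEqFun.coeFn_sub _ _).trans (EventuallyEq.rfl.sub (hL x))
  refine eLpNorm_le_of_forall_indicator_biUnion_le hTm (AEEqFun.aestronglyMeasurable _) ?_
    fun N => ?_
  · filter_upwards [hdiff, hcontr.ae_eq_zero_of_notMem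
      (ae_eq_zero_of_mem_topologicalClosure_span hTm huT x.2)] with a hxa hΩa ha
    rw [hxa, Pi.sub_apply, hΩa ha, glue_of_notMem ha, sub_zero]
  · rw [eLpNorm_congr_ae hdiff.indicator]
    exact eLpNorm_indicator_sub_glue_le hq hcen hcontr hTm hTd huT hnorm hdisj hC.le hnabla
      (fun k => hc k x) N

/-- If for a contractive quasi-linear `L_∞`-centralizer `Ω` on `L_p(μ)`
and a normalized disjointly supported sequence `u` there is `C > 0` with
`∇_{[λu]}Ω ≤ C‖λ‖_p` for all finitely supported scalars `λ`, then the restriction of `Ω`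
to the closed linear span of `u` is trivial. -/
theorem trivialOn_closedSpan_of_nabla_bound
    {α : Type*} [MeasurableSpace α] {μ : Measure α} [SigmaFinite μ]
    {q : ℝ≥0∞} [Fact (1 ≤ q)] (hq : q ≠ ∞)
    (Ω : Lp ℝ q μ → (α →ₘ[μ] ℝ)) (CΩ : ℝ)
    (hcen : IsCentralizerWith Ω CΩ) (hql : L0QuasiLinear Ω) (hcontr : Contractive Ω)
    (u : ℕ → Lp ℝ q μ) (hnorm : ∀ n, ‖u n‖ = 1)
    (hdisj : Pairwise (fun i j => DisjSupp (u i) (u j)))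
    (C : ℝ) (hC : 0 < C)
    (hnabla : ∀ (m : ℕ) (lam : Fin m → ℝ),
      nabla Ω (fun k : Fin m => lam k • u (k : ℕ)) ≤
        ENNReal.ofReal (C * (∑ k : Fin m, |lam k| ^ q.toReal) ^ (1 / q.toReal))) :
    L0TrivialOn Ω (Submodule.span ℝ (Set.range u)).topologicalClosure :=
  trivialOn_closedSpan_of_nabla_bound_general hq Ω CΩ hcen hcontr u hnorm hdisj C hC hnabla
end
end
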